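/- For n ∈ ℕ, a continuous function f on [0,∞) of exponential order, and n-1 < α < n, the Laplace transform of the Caputo fractional derivative of f of order α satisfies L{D_C^α f}(s) = s^α F(s) − Σ_{k=0}^{n-1} s^{α−k−1} f^{(k)}(0), where F(s) = L{f}(s), provided f is n-times continuously differentiable with f^{(n)} of exponential order, and s is real and sufficiently large. -/

import Mathlib

/-!
The Caputo derivative of order `α` is the Riemann–Liouville integral of order `β = n - α` of
`f⁽ⁿ⁾`, i.e. the convolution of `f⁽ⁿ⁾` with `t ^ (β - 1) / Γ(β)`. The Laplace transform turns
this convolution into a product (Fubini after the shear `(τ, t) ↦ (τ, t - τ)`), with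
`L{t ^ (β - 1)}(s) = Γ(β) s ^ (-β)`, while repeated integration by parts gives
`L{f⁽ⁿ⁾}(s) = sⁿ F(s) - ∑ s ^ (n - 1 - k) f⁽ᵏ⁾(0)`. Exponential order of `f⁽ⁿ⁾` passes down to
all lower derivatives by comparison with `E e^{ct}`, so every integral converges for
`s > max a 1`.
-/

open MeasureTheory Set Filter

noncomputable def laplace (g : ℝ → ℝ) (s : ℝ) : ℝ := ∫ t in Ioi 0, Real.exp (-s * t) * g t

def HasExpOrder (g : ℝ → ℝ) (c : ℝ) : Prop :=
  ∃ D, ∀ t, 0 ≤ t → |g t| ≤ D * Real.exp (c * t)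

namespace HasExpOrder

variable {g : ℝ → ℝ} {c s : ℝ}

lemma mono (h : HasExpOrder g c) {c' : ℝ} (hcc' : c ≤ c') : HasExpOrder g c' := by
  obtain ⟨D, hD⟩ := h
  have hD0 : 0 ≤ D := by simpa using (abs_nonneg _).trans (hD 0 le_rfl)
  exact ⟨D, fun t ht => (hD t ht).trans (by gcongr)⟩

lemma of_deriv (hg : Differentiable ℝ g) (h : HasExpOrder (deriv g) c) (hc : 0 < c) :
    HasExpOrder g c := by
  obtain ⟨D, hD⟩ := h
  have hD0 : 0 ≤ D := by simpa using (abs_nonneg _).trans (hD 0 le_rfl)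
  set E := |g 0| + D / c
  have hB : ∀ x, HasDerivAt (fun x => E * Real.exp (c * x)) (E * (Real.exp (c * x) * c)) x :=
    fun x => (((hasDerivAt_id x).const_mul c).exp.congr_deriv (by simp)).const_mul E
  -- the bound `E e^{ct}` grows at rate `(c |g 0| + D) e^{ct} ≥ |g'|`
  refine ⟨E, fun t ht => image_norm_le_of_norm_deriv_right_le_deriv_boundary
    hg.continuous.continuousOn (fun x _ => (hg x).hasDerivAt.hasDerivWithinAt)
    (by simp [E]; positivity) hB (fun x hx => ?_) ⟨ht, le_rfl⟩⟩
  have hE : E * (Real.exp (c * x) * c) =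
      D * Real.exp (c * x) + c * |g 0| * Real.exp (c * x) := by
    simp only [E]; field_simp; ring
  rw [hE, Real.norm_eq_abs]
  have := hD x hx.1
  have : 0 ≤ c * |g 0| * Real.exp (c * x) := by positivity
  linarith

lemma iteratedDeriv_of_contDiff {f : ℝ → ℝ} {n k : ℕ} (hf : ContDiff ℝ n f)
    (h : HasExpOrder (iteratedDeriv n f) c) (hc : 0 < c) (hk : k ≤ n) :
    HasExpOrder (iteratedDeriv k f) c := by
  induction hk using Nat.decreasingInduction with
  | self => exact h
  | of_succ k hk ih =>
    exact of_deriv (hf.differentiable_iteratedDeriv k (by exact_mod_cast hk))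
      (by rwa [← iteratedDeriv_succ]) hc

lemma norm_exp_mul_le {D : ℝ} (hD : ∀ t, 0 ≤ t → |g t| ≤ D * Real.exp (c * t)) {t : ℝ}
    (ht : 0 ≤ t) : ‖Real.exp (-s * t) * g t‖ ≤ D * Real.exp (-(s - c) * t) := by
  have hexp : Real.exp (-(s - c) * t) = Real.exp (-s * t) * Real.exp (c * t) := by
    rw [← Real.exp_add]; ring_nf
  rw [norm_mul, Real.norm_of_nonneg (Real.exp_pos _).le, Real.norm_eq_abs, hexp,
    mul_left_comm]
  exact mul_le_mul_of_nonneg_left (hD t ht) (Real.exp_pos _).le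

lemma integrableOn_laplace (h : HasExpOrder g c) (hm : AEStronglyMeasurable g) (hs : c < s) :
    IntegrableOn (fun t => Real.exp (-s * t) * g t) (Ioi 0) := by
  obtain ⟨D, hD⟩ := h
  refine Integrable.mono' ((exp_neg_integrableOn_Ioi 0 (sub_pos.2 hs)).const_mul D)
    ((by fun_prop : Continuous fun t => Real.exp (-s * t)).aestronglyMeasurable.mul
      hm.restrict) ?_
  filter_upwards [ae_restrict_mem measurableSet_Ioi] with t ht
  exact norm_exp_mul_le hD (le_of_lt ht)

lemma tendsto_exp_mul (h : HasExpOrder g c) (hs : c < s) :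
    Tendsto (fun t => Real.exp (-s * t) * g t) atTop (nhds 0) := by
  obtain ⟨D, hD⟩ := h
  refine squeeze_zero_norm' ((eventually_ge_atTop 0).mono fun t ht => norm_exp_mul_le hD ht) ?_
  simpa using ((Real.tendsto_exp_atBot.comp
    (tendsto_id.const_mul_atTop_of_neg (neg_lt_zero.2 (sub_pos.2 hs)))).const_mul D)

end HasExpOrder

lemma indicator_mul_indicator_sub (g k : ℝ → ℝ) (s t τ : ℝ) :
    (Ioi 0).indicator (fun t => Real.exp (-s * t) * g t) τ *
        (Ioi 0).indicator (fun t => Real.exp (-s * t) * k t) (t - τ) =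
      (Ioo 0 t).indicator (fun τ => Real.exp (-s * t) * (g τ * k (t - τ))) τ := by
  by_cases hτ : 0 < τ <;> by_cases htτ : 0 < t - τ
  · have hexp : Real.exp (-s * τ) * Real.exp (-s * (t - τ)) = Real.exp (-s * t) := by
      rw [← Real.exp_add]; ring_nf
    rw [indicator_of_mem (mem_Ioi.2 hτ), indicator_of_mem (mem_Ioi.2 htτ),
      indicator_of_mem (show τ ∈ Ioo 0 t from ⟨hτ, by linarith⟩), ← hexp]
    ring
  all_goals
    rw [indicator_of_notMem fun h : τ ∈ Ioo 0 t => by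
      simp only [mem_Ioo] at h; simp_all [sub_pos]]
    simp [hτ, htτ]

theorem laplace_convolution {g k : ℝ → ℝ} {s : ℝ}
    (hg : IntegrableOn (fun t => Real.exp (-s * t) * g t) (Ioi 0))
    (hk : IntegrableOn (fun t => Real.exp (-s * t) * k t) (Ioi 0)) :
    laplace (fun t => ∫ τ in 0..t, g τ * k (t - τ)) s = laplace g s * laplace k s := by
  set G : ℝ → ℝ := (Ioi 0).indicator (fun t => Real.exp (-s * t) * g t)
  set K : ℝ → ℝ := (Ioi 0).indicator (fun t => Real.exp (-s * t) * k t)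
  have hshear := measurePreserving_prod_sub (volume : Measure ℝ) (volume : Measure ℝ)
  have hprod : Integrable (fun z : ℝ × ℝ => G z.1 * K z.2) (volume.prod volume) :=
    ((integrable_indicator_iff measurableSet_Ioi).2 hg).mul_prod
      ((integrable_indicator_iff measurableSet_Ioi).2 hk)
  have hsheared : Integrable (fun z : ℝ × ℝ => G z.1 * K (z.2 - z.1)) (volume.prod volume) :=
    (hshear.integrable_comp hprod.aestronglyMeasurable).2 hprod
  have hslice : ∀ t, ∫ τ, G τ * K (t - τ) = (Ioi 0).indicator
      (fun t => Real.exp (-s * t) * ∫ τ in 0..t, g τ * k (t - τ)) t := by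
    intro t
    simp only [G, K, indicator_mul_indicator_sub, integral_indicator measurableSet_Ioo]
    rcases lt_or_ge 0 t with ht | ht
    · rw [indicator_of_mem (mem_Ioi.2 ht), intervalIntegral.integral_of_le ht.le,
        integral_Ioc_eq_integral_Ioo, integral_const_mul]
    · rw [indicator_of_notMem (fun h : t ∈ Ioi 0 => not_lt.2 ht h), Ioo_eq_empty (not_lt.2 ht),
        Measure.restrict_empty, integral_zero_measure]
  calc laplace (fun t => ∫ τ in 0..t, g τ * k (t - τ)) s
      = ∫ t, ∫ τ, G τ * K (t - τ) := by
        simp_rw [hslice]; rw [integral_indicator measurableSet_Ioi]; rfl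
    _ = ∫ z : ℝ × ℝ, G z.1 * K (z.2 - z.1) ∂(volume.prod volume) :=
        (integral_prod_symm _ hsheared).symm
    _ = ∫ z : ℝ × ℝ, G z.1 * K z.2 ∂(volume.prod volume) :=
        hshear.integral_comp (MeasurableEquiv.shearSubRight ℝ).measurableEmbedding
          (fun z => G z.1 * K z.2)
    _ = laplace g s * laplace k s := by
        rw [integral_prod_mul, integral_indicator measurableSet_Ioi,
          integral_indicator measurableSet_Ioi]; rfl

lemma laplace_const_mul (r : ℝ) (g : ℝ → ℝ) (s : ℝ) :
    laplace (fun t => r * g t) s = r * laplace g s := by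
  simp only [laplace, mul_left_comm _ r, integral_const_mul]

theorem laplace_deriv {g : ℝ → ℝ} {c s : ℝ} (hg : Differentiable ℝ g) (h : HasExpOrder g c)
    (h' : HasExpOrder (deriv g) c) (hs : c < s) :
    laplace (deriv g) s = s * laplace g s - g 0 := by
  have hint := h.integrableOn_laplace hg.continuous.aestronglyMeasurable hs
  have hint' := h'.integrableOn_laplace (measurable_deriv g).aestronglyMeasurable hs
  have hprod : ∀ t, HasDerivAt (fun t => Real.exp (-s * t) * g t)
      (Real.exp (-s * t) * deriv g t - s * (Real.exp (-s * t) * g t)) t := fun t =>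
    ((((hasDerivAt_id t).const_mul (-s)).exp).mul (hg t).hasDerivAt).congr_deriv
      (by simp only [id]; ring)
  have key := integral_Ioi_of_hasDerivAt_of_tendsto' (fun t _ => hprod t)
    (hint'.sub (hint.const_mul s)) (h.tendsto_exp_mul hs)
  rw [integral_sub hint' (hint.const_mul s), integral_const_mul] at key
  simp only [mul_zero, Real.exp_zero, one_mul, zero_sub] at key
  rw [laplace, laplace]
  linarith

theorem laplace_iteratedDeriv {f : ℝ → ℝ} {c s : ℝ} {n : ℕ} (hf : ContDiff ℝ n f)
    (h : ∀ k ≤ n, HasExpOrder (iteratedDeriv k f) c) (hs : c < s) :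
    laplace (iteratedDeriv n f) s =
      s ^ n * laplace f s - ∑ k ∈ Finset.range n, s ^ (n - 1 - k) * iteratedDeriv k f 0 := by
  induction n with
  | zero => simp
  | succ n ih =>
    rw [iteratedDeriv_succ,
      laplace_deriv (hf.differentiable_iteratedDeriv n (by norm_cast; omega))
        (h n (by omega)) (by rw [← iteratedDeriv_succ]; exact h _ le_rfl) hs,
      ih (hf.of_le (by norm_cast; omega)) (fun k hk => h k (by omega)), Finset.sum_range_succ,
      mul_sub, Finset.mul_sum]
    have hsum : ∀ k ∈ Finset.range n, s * (s ^ (n - 1 - k) * iteratedDeriv k f 0) =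
        s ^ (n + 1 - 1 - k) * iteratedDeriv k f 0 := fun k hk => by
      rw [← mul_assoc, ← pow_succ', show n - 1 - k + 1 = n + 1 - 1 - k by
        have := Finset.mem_range.1 hk; omega]
    rw [Finset.sum_congr rfl hsum, Nat.add_sub_cancel, Nat.sub_self, pow_zero, pow_succ']
    ring

lemma integrableOn_exp_mul_rpow {β s : ℝ} (hβ : 0 < β) (hs : 0 < s) :
    IntegrableOn (fun u => Real.exp (-s * u) * u ^ (β - 1)) (Ioi 0) := by
  have h := integrableOn_rpow_mul_exp_neg_mul_rpow (p := 1) (by linarith : -1 < β - 1)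
    zero_lt_one hs
  simp only [Real.rpow_one] at h
  exact h.congr_fun (fun u _ => by beta_reduce; ring_nf) measurableSet_Ioi

lemma laplace_rpow {β s : ℝ} (hβ : 0 < β) (hs : 0 < s) :
    laplace (fun u => u ^ (β - 1)) s = s ^ (-β) * Real.Gamma β := by
  have h := Real.integral_rpow_mul_exp_neg_mul_Ioi hβ hs
  rw [one_div, Real.inv_rpow hs.le, ← Real.rpow_neg hs.le] at h
  rw [laplace, ← h]
  simp only [mul_comm (Real.exp _), neg_mul]

noncomputable def riemannLiouville (β : ℝ) (g : ℝ → ℝ) (t : ℝ) : ℝ :=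
  1 / Real.Gamma β * ∫ τ in 0..t, g τ * (t - τ) ^ (β - 1)

theorem laplace_riemannLiouville {β s : ℝ} {g : ℝ → ℝ} (hβ : 0 < β) (hs : 0 < s)
    (hg : IntegrableOn (fun t => Real.exp (-s * t) * g t) (Ioi 0)) :
    laplace (riemannLiouville β g) s = s ^ (-β) * laplace g s := by
  have hΓ : Real.Gamma β ≠ 0 := (Real.Gamma_pos_of_pos hβ).ne'
  unfold riemannLiouville
  rw [laplace_const_mul, laplace_convolution hg (integrableOn_exp_mul_rpow hβ hs),
    laplace_rpow hβ hs]
  field_simp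

lemma caputo_eq_riemannLiouville {ν α t : ℝ} (g : ℝ → ℝ) (ht : 0 ≤ t) :
    1 / Real.Gamma (ν - α) * ∫ τ in 0..t, g τ / (t - τ) ^ (α + 1 - ν) =
      riemannLiouville (ν - α) g t := by
  unfold riemannLiouville
  congr 1
  refine intervalIntegral.integral_congr fun τ hτ => ?_
  rw [uIcc_of_le ht] at hτ
  -- `Real.rpow_neg` needs only `0 ≤ t - τ`, so the endpoint `τ = t` needs no separate care
  rw [show ν - α - 1 = -(α + 1 - ν) by ring, Real.rpow_neg (sub_nonneg.2 hτ.2), div_eq_mul_inv]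

theorem laplace_caputo_general (n : ℕ) (α : ℝ) (hα : α < n)
    (f : ℝ → ℝ) (hf : ContDiff ℝ n f)
    (C a : ℝ)
    (hfnord : ∀ t : ℝ, 0 ≤ t → |iteratedDeriv n f t| ≤ C * Real.exp (a * t)) :
    ∃ s₀ : ℝ, ∀ s : ℝ, s₀ < s →
      (∫ t in Ioi (0:ℝ), Real.exp (-s * t) *
        ((1 / Real.Gamma (n - α)) *
          ∫ τ in (0:ℝ)..t, iteratedDeriv n f τ / (t - τ) ^ (α + 1 - n))) =
      s ^ α * (∫ t in Ioi (0:ℝ), Real.exp (-s * t) * f t) -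
        ∑ k ∈ Finset.range n, s ^ (α - k - 1) * iteratedDeriv k f 0 := by
  have hc : 0 < max a 1 := lt_max_of_lt_right one_pos
  have hord : ∀ k ≤ n, HasExpOrder (iteratedDeriv k f) (max a 1) := fun k hk =>
    (HasExpOrder.mono ⟨C, hfnord⟩ (le_max_left a 1)).iteratedDeriv_of_contDiff hf hc hk
  refine ⟨max a 1, fun s hs => ?_⟩
  have hs0 : 0 < s := hc.trans hs
  have hpow : ∀ m : ℕ, s ^ (-(n - α)) * s ^ m = s ^ (α - n + m) := fun m => by
    rw [← Real.rpow_natCast, ← Real.rpow_add hs0]; ring_nf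
  calc _ = laplace (riemannLiouville (n - α) (iteratedDeriv n f)) s :=
        setIntegral_congr_fun measurableSet_Ioi fun t ht => by
          rw [caputo_eq_riemannLiouville _ (le_of_lt ht)]
    _ = s ^ (-(n - α)) * laplace (iteratedDeriv n f) s :=
        laplace_riemannLiouville (sub_pos.2 hα) hs0 ((hord n le_rfl).integrableOn_laplace
          (hf.continuous_iteratedDeriv n le_rfl).aestronglyMeasurable hs)
    _ = _ := by
      rw [laplace_iteratedDeriv hf hord hs, mul_sub, Finset.mul_sum, ← mul_assoc, hpow,
        sub_add_cancel]
      congr 1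
      refine Finset.sum_congr rfl fun k hk => ?_
      rw [← mul_assoc, hpow, Nat.cast_sub (by have := Finset.mem_range.1 hk; omega),
        Nat.cast_sub (by have := Finset.mem_range.1 hk; omega)]
      ring_nf

theorem laplace_caputo (n : ℕ) (α : ℝ) (hn : (n : ℝ) - 1 < α) (hα : α < n)
    (f : ℝ → ℝ) (hf : ContDiff ℝ n f)
    (C a : ℝ) (hC : 0 ≤ C)
    (hford : ∀ t : ℝ, 0 ≤ t → |f t| ≤ C * Real.exp (a * t))
    (hfnord : ∀ t : ℝ, 0 ≤ t → |iteratedDeriv n f t| ≤ C * Real.exp (a * t)) :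
    ∃ s₀ : ℝ, ∀ s : ℝ, s₀ < s →
      (∫ t in Ioi (0:ℝ), Real.exp (-s * t) *
        ((1 / Real.Gamma (n - α)) *
          ∫ τ in (0:ℝ)..t, iteratedDeriv n f τ / (t - τ) ^ (α + 1 - n))) =
      s ^ α * (∫ t in Ioi (0:ℝ), Real.exp (-s * t) * f t) -
        ∑ k ∈ Finset.range n, s ^ (α - k - 1) * iteratedDeriv k f 0 :=
  laplace_caputo_general n α hα f hf C a hfnord
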